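/- arXiv:0903.4766 — 6 statements merged into one kernel-verified Lean document; each statement's English description precedes it below -/
import Mathlib

section
/- Let K be a primitive quartic CM field with maximal real subfield K₀. Then every unit of the ring of integers of K is the product of a root of unity in K and a unit of the ring of integers of K₀ (i.e. O_K^× = μ_K · O_{K₀}^×), and the group μ_K of roots of unity of K has order 2 or 10. -/
/-!
Let `σ` be the complex conjugation of `K`; its fixed field is `K₀`. For a unit `u`, `u / σ u` has
absolute value `1` under every complex embedding, so it is a root of unity. As `K` contains neither
`√-1` nor `√-3`, every root of unity of `K` has order dividing `10`: `μ_K` is `μ₂` or `μ₁₀`, and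
`u / σ u = ±ζ²` for some `ζ ∈ μ_K`. With the sign `+`, `u ζ⁻¹` is real. With the sign `-`,
`x = u ζ⁻¹` satisfies `σ x = -x`, so `a = x²` is a totally negative unit of `K₀`; then `a` times its
Galois conjugate is a positive rational unit, so it is `1` and `a + a⁻¹ ∈ ℚ`. Hence `y = x + x⁻¹`
has `y² = a + a⁻¹ + 2 ∈ ℚ` while `y` is purely imaginary under every embedding, and `ℚ(y)` would be
an imaginary quadratic subfield of `K`.
-/

open NumberField NumberField.Units NumberField.IsCMField ComplexConjugate Polynomial
open scoped IntermediateField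

theorem Nat.dvd_ten_of_totient_dvd_four {d : ℕ} (hd : d.totient ∣ 4) (h4 : ¬4 ∣ d)
    (h3 : ¬3 ∣ d) : d ∣ 10 := by
  refine (Nat.dvd_iff_prime_pow_dvd_dvd 10 d).mpr fun p k hp hpk ↦ ?_
  rcases k with _ | k
  · simp
  have hφ : p ^ k * (p - 1) ∣ 4 :=
    Nat.totient_prime_pow_succ hp k ▸ (Nat.totient_dvd_of_dvd hpk).trans hd
  have hp5 : p ≤ 5 := by
    have := Nat.le_of_dvd (by norm_num) (dvd_of_mul_left_dvd hφ)
    omega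
  have hk : k ≤ 2 := by
    have h1 := Nat.le_of_dvd (by norm_num) (dvd_of_mul_right_dvd hφ)
    have h2 : 2 ^ k ≤ p ^ k := Nat.pow_le_pow_left hp.two_le k
    by_contra! hk
    have : 2 ^ 3 ≤ 2 ^ k := Nat.pow_le_pow_right (by norm_num) hk
    omega
  interval_cases p <;> interval_cases k <;> omega

theorem Rat.eq_one_of_isIntegral {r : ℚ} (hr : 0 < r) (h : IsIntegral ℤ r)
    (h' : IsIntegral ℤ r⁻¹) : r = 1 := by
  obtain ⟨n, rfl⟩ := IsIntegrallyClosed.isIntegral_iff.mp h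
  obtain ⟨m, hm⟩ := IsIntegrallyClosed.isIntegral_iff.mp h'
  simp only [eq_intCast] at hr hm
  have hn : (0 : ℤ) ≤ n := by exact_mod_cast hr.le
  have hnm : n * m = 1 := by
    have : (n : ℚ) ≠ 0 := hr.ne'
    exact_mod_cast (show (n : ℚ) * m = 1 by rw [hm]; field_simp)
  simp [Int.eq_one_of_mul_eq_one_right hn hnm]

theorem Units.eq_one_or_eq_neg_one_of_sq_eq_one {R : Type*} [Ring R] [NoZeroDivisors R]
    {z : Rˣ} (hz : z ^ 2 = 1) : z = 1 ∨ z = -1 := by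
  have : (z : R) ^ 2 = 1 := by rw [← Units.val_pow_eq_pow_val, hz, Units.val_one]
  rcases sq_eq_one_iff.mp this with h | h
  · exact .inl (Units.ext h)
  · exact .inr (Units.ext h)

namespace Algebra.IsQuadraticExtension

variable {E F : Type*} [Field E] [Field F] [Algebra E F] [IsQuadraticExtension E F]
  [IsGalois E F]

variable (E F) in
theorem natCard_galoisGroup : Nat.card Gal(F/E) = 2 := by
  rw [IsGalois.card_aut_eq_finrank, finrank_eq_two]

variable (E F) in
theorem exists_ne_one : ∃ τ : Gal(F/E), τ ≠ 1 := by
  have : Nontrivial Gal(F/E) :=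
    Finite.one_lt_card_iff_nontrivial.mp (by rw [natCard_galoisGroup]; norm_num)
  exact exists_ne 1

theorem apply_apply (τ : Gal(F/E)) (z : F) : τ (τ z) = z := by
  have : τ ^ 2 = 1 := natCard_galoisGroup E F ▸ pow_card_eq_one'
  simpa [pow_two] using congr($this z)

theorem mem_range_algebraMap_of_apply_eq {τ : Gal(F/E)} (hτ : τ ≠ 1) {z : F} (hz : τ z = z) :
    z ∈ Set.range (algebraMap E F) := by
  have : Fact (Nat.Prime 2) := ⟨Nat.prime_two⟩
  refine (IsGalois.mem_range_algebraMap_iff_fixed (F := E) z).mpr fun f ↦ ?_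
  obtain ⟨k, rfl⟩ := Subgroup.mem_zpowers_iff.mp
    (zpowers_eq_top_of_prime_card (natCard_galoisGroup E F) hτ ▸ Subgroup.mem_top f)
  exact (MulAction.mem_fixedBy_zpowers_iff_mem_fixedBy (g := τ)).mpr hz k

end Algebra.IsQuadraticExtension

section RootsOfUnity

variable {K : Type*} [Field K]

theorem natCard_rootsOfUnity_dvd (m : ℕ) [NeZero m] : Nat.card (rootsOfUnity m K) ∣ m := by
  rw [← IsCyclic.exponent_eq_card]
  exact Monoid.exponent_dvd_of_forall_pow_eq_one fun g ↦
    Subtype.ext <| by simpa using (mem_rootsOfUnity m _).mp g.2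

theorem two_dvd_natCard_rootsOfUnity [CharZero K] {m : ℕ} [NeZero m] (hm : Even m) :
    2 ∣ Nat.card (rootsOfUnity m K) := by
  have h : (-1 : Kˣ) ∈ rootsOfUnity m K := by simp [mem_rootsOfUnity, hm.neg_one_pow]
  have : orderOf (⟨-1, h⟩ : rootsOfUnity m K) = 2 := by
    rw [Subgroup.orderOf_mk, ← orderOf_units, Units.val_neg, Units.val_one, orderOf_neg_one,
      ringChar.eq_zero, if_neg (by norm_num)]
  exact this ▸ orderOf_dvd_natCard _

theorem natCard_pow_eq_one_eq_natCard_rootsOfUnity {m : ℕ} [NeZero m]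
    (h : ∀ x : K, IsOfFinOrder x → x ^ m = 1) :
    Nat.card {x : K // ∃ n, 0 < n ∧ x ^ n = 1} = Nat.card (rootsOfUnity m K) :=
  Nat.card_congr <| (Equiv.subtypeEquivRight fun x ↦ by
    rw [mem_nthRoots (NeZero.pos m), ← isOfFinOrder_iff_pow_eq_one]
    exact ⟨h x, fun hx ↦ isOfFinOrder_iff_pow_eq_one.mpr ⟨m, NeZero.pos m, hx⟩⟩).trans
    (rootsOfUnityEquivNthRoots K m).symm

theorem totient_orderOf_dvd_finrank [NumberField K] {ζ : K} (hζ : IsOfFinOrder ζ) :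
    (orderOf ζ).totient ∣ Module.finrank ℚ K := by
  rw [← natDegree_cyclotomic (orderOf ζ) ℚ,
    cyclotomic_eq_minpoly_rat (IsPrimitiveRoot.orderOf ζ) hζ.orderOf_pos]
  exact minpoly.degree_dvd (.of_finite ℚ ζ)

end RootsOfUnity

section SqrtNegRat

variable {K : Type*} [Field K] [CharZero K]

theorem finrank_adjoin_eq_two_of_sq_eq_neg {q : ℚ} (hq : 0 < q) {t : K} (ht : t ^ 2 = -q) :
    Module.finrank ℚ ℚ⟮t⟯ = 2 := by
  have hroot : aeval t (X ^ 2 + C q) = 0 := by simp [ht]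
  have hmonic := monic_X_pow_add_C q two_ne_zero
  have hint : IsIntegral ℚ t := ⟨_, hmonic, by simpa using hroot⟩
  have hle : (minpoly ℚ t).natDegree ≤ 2 := by
    simpa using natDegree_le_of_dvd (minpoly.dvd ℚ t hroot) hmonic.ne_zero
  have hne : (minpoly ℚ t).natDegree ≠ 1 := by
    rw [Ne, minpoly.natDegree_eq_one_iff]
    rintro ⟨r, rfl⟩
    rw [eq_ratCast] at ht
    have : r ^ 2 = -q := by exact_mod_cast ht
    nlinarith [sq_nonneg r]
  have := minpoly.natDegree_pos hint
  rw [IntermediateField.adjoin.finrank hint]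
  omega

theorem sq_ne_neg_ratCast
    (hprim : ∀ F : Subfield K, Module.finrank ℚ F = 2 → ∃ φ : F →+* ℂ, ∀ x : F, (φ x).im = 0)
    {q : ℚ} (hq : 0 < q) (t : K) : t ^ 2 ≠ -q := by
  intro ht
  obtain ⟨φ, hφ⟩ := hprim ℚ⟮t⟯.toSubfield (finrank_adjoin_eq_two_of_sq_eq_neg hq ht)
  set s : ℚ⟮t⟯.toSubfield := ⟨t, IntermediateField.mem_adjoin_simple_self ℚ t⟩
  have hs : φ s ^ 2 = -q := by
    rw [← map_pow, show s ^ 2 = -q from Subtype.ext (by push_cast; exact ht), map_neg,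
      map_ratCast]
  have hre := congr(Complex.re $hs)
  simp only [pow_two, Complex.mul_re, hφ s, mul_zero, sub_zero, Complex.neg_re,
    Complex.ratCast_re] at hre
  have : (0 : ℝ) < q := by exact_mod_cast hq
  nlinarith [mul_self_nonneg (φ s).re]

theorem orderOf_dvd_ten [NumberField K] (hK : Module.finrank ℚ K = 4)
    (hsqrt : ∀ q : ℚ, 0 < q → ∀ t : K, t ^ 2 ≠ -q) {ζ : K} (hζ : IsOfFinOrder ζ) :
    orderOf ζ ∣ 10 := by
  have hd := IsPrimitiveRoot.orderOf ζ
  refine Nat.dvd_ten_of_totient_dvd_four (hK ▸ totient_orderOf_dvd_finrank hζ) ?_ ?_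
  · rintro ⟨c, hc⟩
    have h2 : IsPrimitiveRoot (ζ ^ (c * 2)) 2 := hd.pow hζ.orderOf_pos (by omega)
    refine hsqrt 1 one_pos (ζ ^ c) ?_
    rw [← pow_mul, h2.eq_neg_one_of_two_right, Rat.cast_one]
  · rintro ⟨c, hc⟩
    have h3 : IsPrimitiveRoot (ζ ^ c) 3 := hd.pow hζ.orderOf_pos (by omega)
    have := h3.geom_sum_eq_zero (by norm_num)
    simp only [Finset.sum_range_succ, Finset.sum_range_zero] at this
    refine hsqrt 3 three_pos (2 * ζ ^ c + 1) ?_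
    push_cast
    linear_combination 4 * this

end SqrtNegRat

open Algebra.IsQuadraticExtension in
theorem add_inv_mem_range_of_forall_neg {F : Type*} [Field F] [NumberField F]
    (hF : Module.finrank ℚ F = 2) {a : F} (ha : IsIntegral ℤ a) (ha' : IsIntegral ℤ a⁻¹)
    (hneg : ∀ ψ : F →+* ℂ, ∃ s : ℝ, s < 0 ∧ ψ a = s) :
    a + a⁻¹ ∈ Set.range (algebraMap ℚ F) := by
  have : Algebra.IsQuadraticExtension ℚ F := ⟨hF⟩
  obtain ⟨τ, hτ⟩ := exists_ne_one ℚ F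
  have hτint {z : F} (hz : IsIntegral ℤ z) : IsIntegral ℤ (τ z) :=
    hz.map (τ : F →+* F).toIntAlgHom
  obtain ⟨r, hr⟩ := mem_range_algebraMap_of_apply_eq hτ (z := a * τ a) <| by
    rw [map_mul, apply_apply, mul_comm]
  have hr_pos : 0 < r := by
    let ψ : F →+* ℂ := Classical.arbitrary _
    obtain ⟨s₁, hs₁, h₁⟩ := hneg ψ
    obtain ⟨s₂, hs₂, h₂⟩ := hneg (ψ.comp τ)
    have : ((r : ℝ) : ℂ) = (s₁ * s₂ : ℝ) := by
      rw [Complex.ofReal_ratCast, ← map_ratCast ψ, ← eq_ratCast (algebraMap ℚ F), hr, map_mul,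
        h₁, show ψ (τ a) = s₂ from h₂, Complex.ofReal_mul]
    have : (0 : ℝ) < r := Complex.ofReal_injective this ▸ mul_pos_of_neg_of_neg hs₁ hs₂
    exact_mod_cast this
  have hinj := (algebraMap ℚ F).injective
  have hr_one : r = 1 := by
    refine Rat.eq_one_of_isIntegral hr_pos ?_ ?_
    · rw [← isIntegral_algebraMap_iff (B := F) hinj, hr]
      exact ha.mul (hτint ha)
    · rw [← isIntegral_algebraMap_iff (B := F) hinj, map_inv₀, hr, mul_inv]
      exact ha'.mul (map_inv₀ τ a ▸ hτint ha')
  have hτa : τ a = a⁻¹ := by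
    rw [hr_one, map_one] at hr
    exact eq_inv_of_mul_eq_one_right hr.symm
  exact mem_range_algebraMap_of_apply_eq hτ (z := a + a⁻¹) <| by
    rw [map_add, ← hτa, apply_apply, add_comm]

theorem NumberField.isTotallyReal_of_forall_im_eq_zero {F : Type*} [Field F]
    (h : ∀ φ : F →+* ℂ, ∀ x : F, (φ x).im = 0) : IsTotallyReal F where
  isReal w := by
    rw [← w.mk_embedding, InfinitePlace.isReal_mk_iff, ComplexEmbedding.isReal_iff]
    exact RingHom.ext fun x ↦ Complex.conj_eq_iff_im.mpr (h _ x)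

theorem NumberField.isTotallyComplex_of_forall_exists_im_ne_zero {F : Type*} [Field F]
    (h : ∀ φ : F →+* ℂ, ∃ x : F, (φ x).im ≠ 0) : IsTotallyComplex F where
  isComplex w := by
    rw [← InfinitePlace.not_isReal_iff_isComplex, ← w.mk_embedding, InfinitePlace.isReal_mk_iff,
      ComplexEmbedding.isReal_iff]
    intro hw
    obtain ⟨x, hx⟩ := h w.embedding
    exact hx (Complex.conj_eq_iff_im.mp (RingHom.congr_fun hw x))

theorem NumberField.CMExtension.exists_eq_algebraMap_of_mem_realUnits (F K : Type*) [Field F]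
    [IsTotallyReal F] [Field K] [CharZero K] [Algebra.IsIntegral ℚ K] [IsTotallyComplex K]
    [Algebra F K] [Algebra.IsQuadraticExtension F K] {u : (𝓞 K)ˣ} (hu : u ∈ realUnits K) :
    ∃ v : (𝓞 F)ˣ, ((u : 𝓞 K) : K) = algebraMap F K (v : 𝓞 F) := by
  obtain ⟨v, hv⟩ := (mem_realUnits_iff K u).mp hu
  refine ⟨Units.map (RingOfIntegers.mapRingEquiv (equivMaximalRealSubfield F K).symm) v, ?_⟩
  simp only [← hv, Units.coe_map, MonoidHom.coe_coe, RingOfIntegers.mapRingEquiv_apply,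
    algebraMap_equivMaximalRealSubfield_symm_apply]
  rfl

theorem NumberField.Units.isOfFinOrder_coe {K : Type*} [Field K] {ζ : (𝓞 K)ˣ}
    (hζ : ζ ∈ torsion K) : IsOfFinOrder ((ζ : 𝓞 K) : K) :=
  ((algebraMap (𝓞 K) K : 𝓞 K →* K).comp (Units.coeHom _)).isOfFinOrder hζ

namespace NumberField.IsCMField

variable {K : Type*} [Field K] [NumberField K] [IsCMField K]

local notation "K⁺" => maximalRealSubfield K

theorem exists_neg_complexEmbedding_sq {y : K} (hy : complexConj K y = -y) (hy0 : y ≠ 0)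
    (φ : K →+* ℂ) : ∃ s : ℝ, s < 0 ∧ φ y ^ 2 = s := by
  have hre : (φ y).re = 0 := by
    have := congr(Complex.re $(complexEmbedding_complexConj K φ y))
    rw [hy, map_neg, Complex.neg_re, Complex.conj_re] at this
    linarith
  have him : (φ y).im ≠ 0 := fun him ↦ (map_ne_zero φ).mpr hy0 (Complex.ext hre him)
  exact ⟨-(φ y).im ^ 2, by nlinarith [sq_pos_of_ne_zero him],
    Complex.ext (by simp [pow_two, hre]) (by simp [pow_two, hre])⟩

theorem neg_of_sq_eq_ratCast {y : K} (hy : complexConj K y = -y) (hy0 : y ≠ 0) {r : ℚ}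
    (hr : y ^ 2 = r) : r < 0 := by
  obtain ⟨s, hs, hφ⟩ := exists_neg_complexEmbedding_sq hy hy0 (Classical.arbitrary (K →+* ℂ))
  rw [← map_pow, hr, map_ratCast, ← Complex.ofReal_ratCast] at hφ
  exact_mod_cast Complex.ofReal_injective hφ ▸ hs

theorem exists_neg_apply_of_coe_eq_sq {x : K} (hx : complexConj K x = -x) (hx0 : x ≠ 0) {a : K⁺}
    (ha : (a : K) = x ^ 2) (ψ : K⁺ →+* ℂ) : ∃ s : ℝ, s < 0 ∧ ψ a = s := by
  obtain ⟨s, hs, hφ⟩ := exists_neg_complexEmbedding_sq hx hx0 (ComplexEmbedding.lift K ψ)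
  refine ⟨s, hs, ?_⟩
  rw [← ComplexEmbedding.lift_algebraMap_apply K ψ, ← hφ, ← map_pow, ← ha]
  rfl

theorem finrank_maximalRealSubfield_eq_two (hK : Module.finrank ℚ K = 4) :
    Module.finrank ℚ K⁺ = 2 := by
  have := Module.finrank_mul_finrank ℚ K⁺ K
  rw [Algebra.IsQuadraticExtension.finrank_eq_two K⁺ K, hK] at this
  omega

theorem exists_sq_add_inv_sq_eq_ratCast (hK : Module.finrank ℚ K = 4) (u : (𝓞 K)ˣ)
    (hu : complexConj K (u : K) = -u) : ∃ c : ℚ, (u : K) ^ 2 + ((u : K) ^ 2)⁻¹ = c := by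
  set x : K := ((u : 𝓞 K) : K)
  have hx0 : x ≠ 0 := by simp [x]
  have hx' : IsIntegral ℤ x⁻¹ := by
    simpa [x] using (u⁻¹ : (𝓞 K)ˣ).val.isIntegral_coe
  have hmem : x ^ 2 ∈ K⁺ := (complexConj_eq_self_iff K _).mp (by rw [map_pow, hu, neg_sq])
  set a : K⁺ := ⟨x ^ 2, hmem⟩
  have hinj := (algebraMap K⁺ K).injective
  obtain ⟨c, hc⟩ := add_inv_mem_range_of_forall_neg (finrank_maximalRealSubfield_eq_two hK)
    (a := a) (by rw [← isIntegral_algebraMap_iff (B := K) hinj]; exact u.val.isIntegral_coe.pow 2)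
    (by rw [← isIntegral_algebraMap_iff (B := K) hinj, map_inv₀]; exact inv_pow x 2 ▸ hx'.pow 2)
    (exists_neg_apply_of_coe_eq_sq hu hx0 rfl)
  rw [eq_ratCast] at hc
  exact ⟨c, by simpa [a] using congr(((↑) : K⁺ → K) $hc).symm⟩

theorem unitsComplexConj_ne_neg (hK : Module.finrank ℚ K = 4)
    (hsqrt : ∀ q : ℚ, 0 < q → ∀ t : K, t ^ 2 ≠ -q) (u : (𝓞 K)ˣ) :
    unitsComplexConj K u ≠ -u := by
  intro hu
  set x : K := ((u : 𝓞 K) : K)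
  have hconj : complexConj K x = -x := by
    simpa using congr(((($hu : (𝓞 K)ˣ) : 𝓞 K) : K))
  have hx0 : x ≠ 0 := by simp [x]
  obtain ⟨c, hc⟩ := exists_sq_add_inv_sq_eq_ratCast hK u hconj
  set y := x + x⁻¹ with hy_def
  have hy : complexConj K y = -y := by
    rw [map_add, map_inv₀, hconj, inv_neg, neg_add]
  have hy0 : y ≠ 0 := fun hy0 ↦ hsqrt 1 one_pos x <| by
    have : x * y = x ^ 2 + 1 := by rw [hy_def, mul_add, mul_inv_cancel₀ hx0]; ring
    rw [Rat.cast_one]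
    linear_combination x * hy0 - this
  have hy2 : y ^ 2 = ((c + 2 : ℚ) : K) := by
    rw [Rat.cast_add, ← hc, hy_def]
    field_simp
    ring
  refine hsqrt (-(c + 2)) (neg_pos.mpr (neg_of_sq_eq_ratCast hy hy0 hy2)) y ?_
  rw [hy2]
  push_cast
  ring

theorem realUnits_sup_torsion_eq_top {n : ℕ} (hn : Odd n)
    (htors : ∀ ζ : torsion K, ζ ^ (2 * n) = 1)
    (hanti : ∀ u : (𝓞 K)ˣ, unitsComplexConj K u ≠ -u) :
    realUnits K ⊔ torsion K = ⊤ := by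
  refine (Subgroup.eq_top_iff' _).mpr fun u ↦ ?_
  obtain ⟨k, rfl⟩ := hn
  set w := unitsMulComplexConjInv K u
  set θ : torsion K := w ^ (k + 1)
  set v := u * (θ : (𝓞 K)ˣ)⁻¹
  have hv : (unitsMulComplexConjInv K v : (𝓞 K)ˣ) ^ 2 = 1 := by
    have hfv : unitsMulComplexConjInv K v = (w ^ (2 * k + 1))⁻¹ := by
      rw [map_mul, map_inv, unitsMulComplexConjInv_apply_torsion]
      simp only [θ, w]
      group
    have : unitsMulComplexConjInv K v ^ 2 = 1 := by
      rw [hfv, inv_pow, ← pow_mul, mul_comm, htors, inv_one]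
    exact_mod_cast congr(Subtype.val $this)
  rcases Units.eq_one_or_eq_neg_one_of_sq_eq_one hv with h | h
  · refine Subgroup.mem_sup.mpr ⟨v, ?_, θ, θ.2, by simp [v]⟩
    rw [← unitsMulComplexConjInv_ker, MonoidHom.mem_ker]
    exact Subtype.ext h
  · refine absurd ?_ (hanti v)
    rw [unitsMulComplexConjInv_apply, mul_inv_eq_iff_eq_mul, neg_one_mul] at h
    exact (neg_eq_iff_eq_neg.mpr h).symm

end NumberField.IsCMField

theorem stmt_0_general
    (K₀ K : Type*) [Field K₀] [Field K] [NumberField K] [Algebra K₀ K]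
    -- K is quartic over ℚ and quadratic over its real quadratic subfield K₀
    (hdegK : Module.finrank ℚ K = 4)
    (hquad : Module.finrank K₀ K = 2)
    -- K₀ is totally real
    (htotreal : ∀ φ : K₀ →+* ℂ, ∀ x : K₀, (φ x).im = 0)
    -- K is totally imaginary
    (htotimag : ∀ φ : K →+* ℂ, ∃ x : K, (φ x).im ≠ 0)
    -- K is primitive: it contains no imaginary quadratic subfield
    (hprim : ∀ F : Subfield K, Module.finrank ℚ F = 2 →
      ∃ φ : F →+* ℂ, ∀ x : F, (φ x).im = 0) :
    (∀ u : (𝓞 K)ˣ, ∃ ζ : K, (∃ n : ℕ, 0 < n ∧ ζ ^ n = 1) ∧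
      ∃ v : (𝓞 K₀)ˣ,
        algebraMap (𝓞 K) K (u : 𝓞 K) =
          ζ * algebraMap K₀ K (algebraMap (𝓞 K₀) K₀ (v : 𝓞 K₀))) ∧
    (Nat.card {x : K // ∃ n : ℕ, 0 < n ∧ x ^ n = 1} = 2 ∨
     Nat.card {x : K // ∃ n : ℕ, 0 < n ∧ x ^ n = 1} = 10) := by
  have := isTotallyReal_of_forall_im_eq_zero htotreal
  have := isTotallyComplex_of_forall_exists_im_ne_zero htotimag
  have : Algebra.IsQuadraticExtension K₀ K := ⟨hquad⟩
  have : IsCMField K := IsCMField.ofCMExtension K₀ K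
  have hsqrt : ∀ q : ℚ, 0 < q → ∀ t : K, t ^ 2 ≠ -q := fun _ hq ↦ sq_ne_neg_ratCast hprim hq
  have h10 (ζ : K) (hζ : IsOfFinOrder ζ) : ζ ^ 10 = 1 :=
    orderOf_dvd_iff_pow_eq_one.mp (orderOf_dvd_ten hdegK hsqrt hζ)
  refine ⟨fun u ↦ ?_, ?_⟩
  · have htors (ζ : torsion K) : ζ ^ (2 * 5) = 1 :=
      Subtype.ext <| coe_injective K <| by simpa using h10 _ (isOfFinOrder_coe ζ.2)
    have hu := realUnits_sup_torsion_eq_top (by decide) htors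
      (unitsComplexConj_ne_neg hdegK hsqrt) ▸ Subgroup.mem_top u
    obtain ⟨v, hv, ζ, hζ, rfl⟩ := Subgroup.mem_sup.mp hu
    obtain ⟨v₀, hv₀⟩ := CMExtension.exists_eq_algebraMap_of_mem_realUnits K₀ K hv
    refine ⟨_, isOfFinOrder_iff_pow_eq_one.mp (isOfFinOrder_coe hζ), v₀, ?_⟩
    simp [hv₀, mul_comm]
  · rw [natCard_pow_eq_one_eq_natCard_rootsOfUnity h10]
    have hdvd := natCard_rootsOfUnity_dvd (K := K) 10
    have heven := two_dvd_natCard_rootsOfUnity (K := K) (m := 10) (by decide)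
    generalize Nat.card (rootsOfUnity 10 K) = c at hdvd heven ⊢
    have := Nat.le_of_dvd (by norm_num) hdvd
    interval_cases c <;> omega

/-- Let `K` be a primitive quartic CM field with maximal real subfield `K₀`
(`K₀` totally real quadratic, `K/K₀` a totally imaginary quadratic extension, and `K` has
no imaginary quadratic subfield).  Then every unit of `𝓞 K` is the product of a root of
unity of `K` and a unit of `𝓞 K₀`, and the group of roots of unity of `K` has order
`2` or `10`. -/
theorem stmt_0
    (K₀ K : Type*) [Field K₀] [Field K] [NumberField K₀] [NumberField K] [Algebra K₀ K]
    -- K is quartic over ℚ and quadratic over its real quadratic subfield K₀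
    (hdegK : Module.finrank ℚ K = 4)
    (hdegK₀ : Module.finrank ℚ K₀ = 2)
    (hquad : Module.finrank K₀ K = 2)
    -- K₀ is totally real
    (htotreal : ∀ φ : K₀ →+* ℂ, ∀ x : K₀, (φ x).im = 0)
    -- K is totally imaginary
    (htotimag : ∀ φ : K →+* ℂ, ∃ x : K, (φ x).im ≠ 0)
    -- K is primitive: it contains no imaginary quadratic subfield
    (hprim : ∀ F : Subfield K, Module.finrank ℚ F = 2 →
      ∃ φ : F →+* ℂ, ∀ x : F, (φ x).im = 0) :
    (∀ u : (𝓞 K)ˣ, ∃ ζ : K, (∃ n : ℕ, 0 < n ∧ ζ ^ n = 1) ∧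
      ∃ v : (𝓞 K₀)ˣ,
        algebraMap (𝓞 K) K (u : 𝓞 K) =
          ζ * algebraMap K₀ K (algebraMap (𝓞 K₀) K₀ (v : 𝓞 K₀))) ∧
    (Nat.card {x : K // ∃ n : ℕ, 0 < n ∧ x ^ n = 1} = 2 ∨
     Nat.card {x : K // ∃ n : ℕ, 0 < n ∧ x ^ n = 1} = 10) :=
  stmt_0_general K₀ K hdegK hquad htotreal htotimag hprim
end

section
/- For every positive definite symmetric real 2×2 matrix Y, one has (3/4)·m₁(Y)·m₂(Y) ≤ det Y ≤ m₁(Y)·m₂(Y). -/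
open Matrix

/-- The integral quadratic form attached to a real 2×2 matrix `Y`: `p ↦ pᵀ Y p`
for integer vectors `p ∈ ℤ²`. -/
noncomputable def quadForm (Y : Matrix (Fin 2) (Fin 2) ℝ) (p : Fin 2 → ℤ) : ℝ :=
  (fun i => (p i : ℝ)) ⬝ᵥ Y.mulVec (fun i => (p i : ℝ))

/-- The first consecutive minimum `m₁(Y)`: the infimum (minimum) of `pᵀYp` over nonzero
integer vectors `p`. -/
noncomputable def m1 (Y : Matrix (Fin 2) (Fin 2) ℝ) : ℝ :=
  sInf {r : ℝ | ∃ p : Fin 2 → ℤ, p ≠ 0 ∧ quadForm Y p = r}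

/-- The second consecutive minimum `m₂(Y)`: the infimum (minimum) of `qᵀYq` over integer
vectors `q` linearly independent of a vector `p` attaining `m₁(Y)` (the value does not
depend on the choice of such `p`). -/
noncomputable def m2 (Y : Matrix (Fin 2) (Fin 2) ℝ) : ℝ :=
  sInf {r : ℝ | ∃ p q : Fin 2 → ℤ, p ≠ 0 ∧ quadForm Y p = m1 Y ∧
    LinearIndependent ℤ ![p, q] ∧ quadForm Y q = r}

/-! The identity `Q(p) Q(q) - B(p, q)² = det Y · (p₀q₁ - p₁q₀)²` for the quadratic form `Q` of `Y`
and its polarization `B` drives both bounds. If `p, q` realise `m₁, m₂`, then `p₀q₁ - p₁q₀` is a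
nonzero integer, whence `det Y ≤ m₁ m₂`. Conversely, a vector `p` realising `m₁` is primitive, so
it extends to a basis `p, q` of `ℤ²`; replacing `q` by `q + k p` for a suitable integer `k` gives
`|B(p, q)| ≤ m₁ / 2`, and then `det Y = m₁ Q(q) - B(p, q)² ≥ m₁ m₂ - m₁² / 4 ≥ (3/4) m₁ m₂`
since `m₁ ≤ m₂`. The minima are attained because `Q` has finite sublevel sets on `ℤ²`. -/

namespace Matrix

theorem IsHermitian.isSymm {n α : Type*} [Star α] [TrivialStar α] {A : Matrix n n α}
    (h : A.IsHermitian) : A.IsSymm := by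
  rwa [IsHermitian, conjTranspose_eq_transpose_of_trivial] at h

section Fin2

variable {R : Type*} [CommRing R] {Y : Matrix (Fin 2) (Fin 2) R}

theorem IsSymm.dotProduct_mulVec_mul_sub_sq (hY : Y.IsSymm) (x y : Fin 2 → R) :
    (x ⬝ᵥ Y *ᵥ x) * (y ⬝ᵥ Y *ᵥ y) - (x ⬝ᵥ Y *ᵥ y) ^ 2
      = Y.det * (x 0 * y 1 - x 1 * y 0) ^ 2 := by
  simp only [dotProduct, mulVec, Fin.sum_univ_two, det_fin_two, hY.apply 0 1]
  ring

theorem IsSymm.det_mul_sq_add_sq_le [LinearOrder R] [IsStrictOrderedRing R] (hY : Y.IsSymm)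
    (x : Fin 2 → R) : Y.det * (x 0 ^ 2 + x 1 ^ 2) ≤ Y.trace * (x ⬝ᵥ Y *ᵥ x) := by
  have key : Y.trace * (x ⬝ᵥ Y *ᵥ x) = Y.det * (x 0 ^ 2 + x 1 ^ 2)
      + ((Y 0 0 * x 0 + Y 0 1 * x 1) ^ 2 + (Y 0 1 * x 0 + Y 1 1 * x 1) ^ 2) := by
    simp only [dotProduct, mulVec, Fin.sum_univ_two, det_fin_two, trace_fin_two, hY.apply 0 1]
    ring
  rw [key]
  exact le_add_of_nonneg_right (by positivity)

end Fin2

end Matrix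

theorem linearIndependent_pair_iff_cross_ne_zero {R : Type*} [CommRing R] [IsDomain R]
    (p q : Fin 2 → R) : LinearIndependent R ![p, q] ↔ p 0 * q 1 - p 1 * q 0 ≠ 0 := by
  have hcoord (s t : R) :
      s • p + t • q = 0 ↔ s * p 0 + t * q 0 = 0 ∧ s * p 1 + t * q 1 = 0 := by
    simp [funext_iff, Fin.forall_fin_two]
  simp only [LinearIndependent.pair_iff, hcoord]
  constructor
  · intro h hcross
    have hp1 := (h (q 1) (-p 1) ⟨by linear_combination hcross, by ring⟩).2
    have hp0 := (h (q 0) (-p 0) ⟨by ring, by linear_combination -hcross⟩).2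
    exact one_ne_zero (h 1 0 ⟨by simp [neg_eq_zero.mp hp0], by simp [neg_eq_zero.mp hp1]⟩).1
  · rintro hcross s t ⟨e0, e1⟩
    exact ⟨(mul_eq_zero.mp (by linear_combination q 1 * e0 - q 0 * e1)).resolve_right hcross,
      (mul_eq_zero.mp (by linear_combination p 0 * e1 - p 1 * e0)).resolve_right hcross⟩

theorem isLeast_csInf_of_finite_inter_Iic {α : Type*} [ConditionallyCompleteLinearOrder α]
    {S : Set α} {c : α} (hc : c ∈ S) (hfin : (S ∩ Set.Iic c).Finite) : IsLeast S (sInf S) := by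
  obtain ⟨m, ⟨hmS, hmc⟩, hmin⟩ := Set.exists_min_image _ id hfin ⟨c, hc, le_rfl⟩
  have hm : IsLeast S m := ⟨hmS, fun x hx =>
    (le_total x c).elim (fun hxc => hmin x ⟨hx, hxc⟩) (fun hcx => hmc.trans hcx)⟩
  rwa [hm.csInf_eq]

noncomputable def bilinForm (Y : Matrix (Fin 2) (Fin 2) ℝ) (p q : Fin 2 → ℤ) : ℝ :=
  (fun i => (p i : ℝ)) ⬝ᵥ Y *ᵥ fun i => (q i : ℝ)

section QuadForm

variable {Y : Matrix (Fin 2) (Fin 2) ℝ}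

theorem quadForm_pos (hY : Y.PosDef) {p : Fin 2 → ℤ} (hp : p ≠ 0) : 0 < quadForm Y p := by
  have hx : (fun i => (p i : ℝ)) ≠ 0 := fun h =>
    hp (funext fun i => by simpa using congrFun h i)
  have := hY.dotProduct_mulVec_pos hx
  rwa [star_trivial] at this

theorem quadForm_smul (c : ℤ) (p : Fin 2 → ℤ) :
    quadForm Y (c • p) = c ^ 2 * quadForm Y p := by
  simp only [quadForm, dotProduct, mulVec, Fin.sum_univ_two, Pi.smul_apply, smul_eq_mul,
    Int.cast_mul]
  ring

theorem finite_setOf_quadForm_le (hY : Y.PosDef) (C : ℝ) :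
    {p : Fin 2 → ℤ | quadForm Y p ≤ C}.Finite := by
  set K : ℤ := ⌈Y.trace * C / Y.det⌉
  refine (Set.finite_Icc (fun _ => -K) fun _ => K).subset fun p hp => ?_
  have hsum : (p 0 : ℝ) ^ 2 + (p 1 : ℝ) ^ 2 ≤ K :=
    calc _ ≤ Y.trace * C / Y.det := by
          rw [le_div_iff₀' hY.det_pos]
          exact (hY.isHermitian.isSymm.det_mul_sq_add_sq_le _).trans
            (mul_le_mul_of_nonneg_left hp hY.trace_pos.le)
      _ ≤ K := Int.le_ceil _
  have habs (i : Fin 2) : |p i| ≤ K := by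
    rw [← Int.natCast_natAbs]
    refine (Int.natAbs_le_self_sq _).trans ?_
    have : (p i : ℝ) ^ 2 ≤ K := le_trans (by fin_cases i <;> simp [sq_nonneg]) hsum
    exact_mod_cast this
  exact ⟨fun i => neg_le_of_abs_le (habs i), fun i => le_of_abs_le (habs i)⟩

theorem quadForm_mul_quadForm_sub_bilinForm_sq (hY : Y.IsSymm) (p q : Fin 2 → ℤ) :
    quadForm Y p * quadForm Y q - bilinForm Y p q ^ 2
      = Y.det * ((p 0 * q 1 - p 1 * q 0 : ℤ) : ℝ) ^ 2 := by
  push_cast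
  exact hY.dotProduct_mulVec_mul_sub_sq _ _

theorem isLeast_sInf_of_subset_range_quadForm (hY : Y.PosDef) {S : Set ℝ} (hS : S.Nonempty)
    (hrange : S ⊆ Set.range (quadForm Y)) : IsLeast S (sInf S) := by
  obtain ⟨c, hc⟩ := hS
  refine isLeast_csInf_of_finite_inter_Iic hc
    (((finite_setOf_quadForm_le hY c).image (quadForm Y)).subset ?_)
  rintro r ⟨hr, hrc⟩
  obtain ⟨p, rfl⟩ := hrange hr
  exact ⟨p, hrc, rfl⟩

theorem isLeast_m1 (hY : Y.PosDef) :
    IsLeast {r | ∃ p : Fin 2 → ℤ, p ≠ 0 ∧ quadForm Y p = r} (m1 Y) :=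
  isLeast_sInf_of_subset_range_quadForm hY ⟨_, Pi.single 0 1, by simp, rfl⟩
    fun _ ⟨p, _, hp⟩ => ⟨p, hp⟩

theorem m1_pos (hY : Y.PosDef) : 0 < m1 Y := by
  obtain ⟨p, hp, hpm⟩ := (isLeast_m1 hY).1
  exact hpm ▸ quadForm_pos hY hp

theorem isCoprime_of_quadForm_eq_m1 (hY : Y.PosDef) {p : Fin 2 → ℤ} (hp : p ≠ 0)
    (hpm : quadForm Y p = m1 Y) : IsCoprime (p 0) (p 1) := by
  have hgcd : 0 < Int.gcd (p 0) (p 1) :=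
    Int.gcd_pos_iff.mpr (by contrapose! hp; ext i; fin_cases i <;> simp [hp])
  obtain ⟨g, a, b, hg, hab, ha, hb⟩ := Int.exists_gcd_one' hgcd
  have hp' : p = (g : ℤ) • ![a, b] := by ext i; fin_cases i <;> simp [ha, hb, mul_comm]
  have hne : ![a, b] ≠ 0 := by rintro h; rw [h, smul_zero] at hp'; exact hp hp'
  have hle : quadForm Y p ≤ quadForm Y ![a, b] := hpm ▸ (isLeast_m1 hY).2 ⟨_, hne, rfl⟩
  rw [hp', quadForm_smul] at hle
  have hg1 : g = 1 := by
    have hg2 : ((g : ℤ) : ℝ) ^ 2 ≤ 1 := (mul_le_iff_le_one_left (quadForm_pos hY hne)).mp hle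
    have : g ^ 2 ≤ 1 := by exact_mod_cast hg2
    nlinarith
  rw [Int.isCoprime_iff_gcd_eq_one, ha, hb, hg1]
  simpa using hab

theorem exists_cross_eq_one_abs_bilinForm_le {p : Fin 2 → ℤ}
    (hp : IsCoprime (p 0) (p 1)) (hQ : 0 < quadForm Y p) :
    ∃ q : Fin 2 → ℤ, p 0 * q 1 - p 1 * q 0 = 1 ∧ |bilinForm Y p q| ≤ quadForm Y p / 2 := by
  obtain ⟨u, v, huv⟩ := hp
  set k := round (-bilinForm Y p ![-v, u] / quadForm Y p)
  refine ⟨![-v, u] + k • p, ?_, ?_⟩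
  · simp only [Pi.add_apply, Pi.smul_apply, smul_eq_mul, cons_val_zero, cons_val_one]
    linear_combination huv
  have hshift :
      bilinForm Y p (![-v, u] + k • p) = bilinForm Y p ![-v, u] + k * quadForm Y p := by
    simp only [bilinForm, quadForm, dotProduct, mulVec, Fin.sum_univ_two, Pi.add_apply,
      Pi.smul_apply, smul_eq_mul, Int.cast_add, Int.cast_mul]
    ring
  calc |bilinForm Y p (![-v, u] + k • p)|
      = quadForm Y p * |-bilinForm Y p ![-v, u] / quadForm Y p - k| := by
        rw [hshift, ← abs_of_pos hQ, ← abs_mul, ← abs_neg, abs_of_pos hQ]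
        congr 1
        field_simp
        ring
    _ ≤ quadForm Y p * (1 / 2) := mul_le_mul_of_nonneg_left (abs_sub_round _) hQ.le
    _ = quadForm Y p / 2 := by ring

theorem isLeast_m2 (hY : Y.PosDef) :
    IsLeast {r | ∃ p q : Fin 2 → ℤ, p ≠ 0 ∧ quadForm Y p = m1 Y ∧
      LinearIndependent ℤ ![p, q] ∧ quadForm Y q = r} (m2 Y) := by
  obtain ⟨p, hp, hpm⟩ := (isLeast_m1 hY).1
  obtain ⟨q, hcross, -⟩ := exists_cross_eq_one_abs_bilinForm_le
    (isCoprime_of_quadForm_eq_m1 hY hp hpm) (quadForm_pos hY hp)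
  have hpq : LinearIndependent ℤ ![p, q] :=
    (linearIndependent_pair_iff_cross_ne_zero p q).mpr (hcross ▸ one_ne_zero)
  exact isLeast_sInf_of_subset_range_quadForm hY ⟨_, p, q, hp, hpm, hpq, rfl⟩
    fun _ ⟨_, q, _, _, _, hq⟩ => ⟨q, hq⟩

theorem m1_le_m2 (hY : Y.PosDef) : m1 Y ≤ m2 Y := by
  obtain ⟨p, q, -, -, hpq, hqm⟩ := (isLeast_m2 hY).1
  exact hqm ▸ (isLeast_m1 hY).2 ⟨q, by simpa using LinearIndependent.ne_zero 1 hpq, rfl⟩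

theorem det_le_m1_mul_m2 (hY : Y.PosDef) : Y.det ≤ m1 Y * m2 Y := by
  obtain ⟨p, q, -, hpm, hpq, hqm⟩ := (isLeast_m2 hY).1
  have hcross : (1 : ℝ) ≤ ((p 0 * q 1 - p 1 * q 0 : ℤ) : ℝ) ^ 2 := by
    have := (linearIndependent_pair_iff_cross_ne_zero p q).mp hpq
    exact_mod_cast one_le_sq_iff_one_le_abs _ |>.mpr (Int.one_le_abs this)
  calc Y.det ≤ Y.det * ((p 0 * q 1 - p 1 * q 0 : ℤ) : ℝ) ^ 2 :=
        le_mul_of_one_le_right hY.det_pos.le hcross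
    _ = m1 Y * m2 Y - bilinForm Y p q ^ 2 := by
        rw [← hpm, ← hqm, quadForm_mul_quadForm_sub_bilinForm_sq hY.isHermitian.isSymm]
    _ ≤ m1 Y * m2 Y := sub_le_self _ (sq_nonneg _)

theorem three_quarters_m1_mul_m2_le_det (hY : Y.PosDef) : 3 / 4 * (m1 Y * m2 Y) ≤ Y.det := by
  obtain ⟨p, hp, hpm⟩ := (isLeast_m1 hY).1
  obtain ⟨q, hcross, hB⟩ := exists_cross_eq_one_abs_bilinForm_le
    (isCoprime_of_quadForm_eq_m1 hY hp hpm) (quadForm_pos hY hp)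
  have hpq : LinearIndependent ℤ ![p, q] :=
    (linearIndependent_pair_iff_cross_ne_zero p q).mpr (hcross ▸ one_ne_zero)
  have hm2 : m2 Y ≤ quadForm Y q := (isLeast_m2 hY).2 ⟨p, q, hp, hpm, hpq, rfl⟩
  have hB2 : bilinForm Y p q ^ 2 ≤ (m1 Y / 2) ^ 2 := by
    rw [← hpm, ← sq_abs]
    exact pow_le_pow_left₀ (abs_nonneg _) hB 2
  have hm1 := m1_pos hY
  calc 3 / 4 * (m1 Y * m2 Y) ≤ m1 Y * m2 Y - (m1 Y / 2) ^ 2 := by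
        nlinarith [mul_le_mul_of_nonneg_left (m1_le_m2 hY) hm1.le]
    _ ≤ m1 Y * quadForm Y q - bilinForm Y p q ^ 2 := by gcongr
    _ = Y.det := by
        rw [← hpm, quadForm_mul_quadForm_sub_bilinForm_sq hY.isHermitian.isSymm, hcross]
        norm_num

end QuadForm

theorem stmt_3_general (Y : Matrix (Fin 2) (Fin 2) ℝ) (hpos : Y.PosDef) :
    3 / 4 * (m1 Y * m2 Y) ≤ Y.det ∧ Y.det ≤ m1 Y * m2 Y :=
  ⟨three_quarters_m1_mul_m2_le_det hpos, det_le_m1_mul_m2 hpos⟩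

/-- for every positive definite symmetric real 2×2 matrix `Y`,
`(3/4)·m₁(Y)·m₂(Y) ≤ det Y ≤ m₁(Y)·m₂(Y)`. -/
theorem stmt_3 (Y : Matrix (Fin 2) (Fin 2) ℝ) (hsymm : Y.IsSymm) (hpos : Y.PosDef) :
    3 / 4 * (m1 Y * m2 Y) ≤ Y.det ∧ Y.det ≤ m1 Y * m2 Y :=
  stmt_3_general Y hpos
end

section
/- Let Z = [[z₁, z₃],[z₃, z₂]] ∈ H₂ satisfy |Re z₁| ≤ 1/2 and Im z₁ < 1/2, and let N₀ ∈ Sp₄(ℤ) be the matrix with rows (0,0,−1,0), (0,1,0,0), (1,0,0,0), (0,0,0,1). Then det N₀*(Z) = z₁, |z₁|² ≤ 1/2, and det Im N₀(Z) ≥ 2 · det Im Z. -/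
open Matrix

/-- An integer 2×2 matrix viewed as a complex matrix. -/
noncomputable def cmat (A : Matrix (Fin 2) (Fin 2) ℤ) : Matrix (Fin 2) (Fin 2) ℂ :=
  A.map (Int.cast : ℤ → ℂ)

/-- The (entrywise) imaginary part of a complex 2×2 matrix. -/
noncomputable def imPart (Z : Matrix (Fin 2) (Fin 2) ℂ) : Matrix (Fin 2) (Fin 2) ℝ :=
  Z.map Complex.im

/-- The upper-left block `A` of the matrix `N₀ ∈ Sp₄(ℤ)` with rows
`(0,0,−1,0), (0,1,0,0), (1,0,0,0), (0,0,0,1)`. -/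
def N0A : Matrix (Fin 2) (Fin 2) ℤ := !![0, 0; 0, 1]

/-- The upper-right block `B` of `N₀`. -/
def N0B : Matrix (Fin 2) (Fin 2) ℤ := !![-1, 0; 0, 0]

/-- The lower-left block `C` of `N₀`. -/
def N0C : Matrix (Fin 2) (Fin 2) ℤ := !![1, 0; 0, 0]

/-- The lower-right block `D` of `N₀`. -/
def N0D : Matrix (Fin 2) (Fin 2) ℤ := !![0, 0; 0, 1]

/-! `N₀` is the inversion `z₁ ↦ -1/z₁` embedded in `Sp₄(ℤ)`: here `N₀*(Z) = [[z₁, z₃], [0, 1]]`, so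
its determinant is `z₁`, and the transformation law `det Im M(Z) = det Im Z / |det M*(Z)|²`
becomes the explicit identity `det Im N₀(Z) = det Im Z / |z₁|²`. The hypotheses on `z₁` give
`|z₁|² ≤ 1/4 + 1/4`, whence the factor `2`. -/

lemma normSq_le_half_of_abs_le {z : ℂ} (hre : |z.re| ≤ 1 / 2) (him : |z.im| ≤ 1 / 2) :
    Complex.normSq z ≤ 1 / 2 := by
  rw [Complex.normSq_apply]
  nlinarith [abs_mul_abs_self z.re, abs_mul_abs_self z.im, abs_nonneg z.re, abs_nonneg z.im]

lemma inv_fin_two_of_zero_one {K : Type*} [Field K] {a : K} (ha : a ≠ 0) (b : K) :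
    !![a, b; 0, 1]⁻¹ = !![a⁻¹, -b * a⁻¹; 0, 1] := by
  refine inv_eq_right_inv ?_
  rw [mul_fin_two, one_fin_two]
  simp [ha, mul_left_comm a]

lemma imPart_det_fin_two_of (a b c d : ℂ) :
    (imPart !![a, b; c, d]).det = a.im * d.im - b.im * c.im := by
  rw [imPart, ← det_fin_two_of]
  congr 1
  ext i j
  fin_cases i <;> fin_cases j <;> rfl

lemma Complex.im_det_inversion {a : ℂ} (ha : a ≠ 0) (b d : ℂ) :
    (-a⁻¹).im * (d - b ^ 2 * a⁻¹).im - (b * a⁻¹).im * (b * a⁻¹).im =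
      (a.im * d.im - b.im * b.im) / normSq a := by
  have hn : normSq a ≠ 0 := (normSq_pos.mpr ha).ne'
  simp only [neg_im, sub_im, mul_im, inv_re, inv_im, pow_two, mul_re]
  field_simp
  rw [normSq_apply]
  ring

section N0

variable {Z : Matrix (Fin 2) (Fin 2) ℂ}

lemma lower_block_N0 :
    cmat N0C * Z + cmat N0D = !![Z 0 0, Z 0 1; 0, 1] := by
  ext i j
  fin_cases i <;> fin_cases j <;> simp [cmat, N0C, N0D, mul_apply, Fin.sum_univ_two]

lemma upper_block_N0 (hZ : Z.IsSymm) :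
    cmat N0A * Z + cmat N0B = !![-1, 0; Z 0 1, Z 1 1] := by
  ext i j
  fin_cases i <;> fin_cases j <;>
    simp [cmat, N0A, N0B, mul_apply, Fin.sum_univ_two, hZ.apply 0 1]

lemma N0_smul_eq (hZ : Z.IsSymm) (ha : Z 0 0 ≠ 0) :
    (cmat N0A * Z + cmat N0B) * (cmat N0C * Z + cmat N0D)⁻¹ =
      !![-(Z 0 0)⁻¹, Z 0 1 * (Z 0 0)⁻¹; Z 0 1 * (Z 0 0)⁻¹, Z 1 1 - Z 0 1 ^ 2 * (Z 0 0)⁻¹] := by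
  rw [upper_block_N0 hZ, lower_block_N0, inv_fin_two_of_zero_one ha, mul_fin_two]
  simp only [neg_mul, one_mul, mul_zero, add_zero, mul_neg, neg_neg, mul_one, pow_two,
    mul_assoc, neg_add_eq_sub]

lemma imPart_det_N0_smul (hZ : Z.IsSymm) (ha : Z 0 0 ≠ 0) :
    (imPart ((cmat N0A * Z + cmat N0B) * (cmat N0C * Z + cmat N0D)⁻¹)).det =
      (imPart Z).det / Complex.normSq (Z 0 0) := by
  rw [N0_smul_eq hZ ha, imPart_det_fin_two_of, Complex.im_det_inversion ha]
  congr 1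
  conv_rhs => rw [Z.eta_fin_two, imPart_det_fin_two_of]
  rw [hZ.apply 0 1]

end N0

/-- for `Z = [[z₁,z₃],[z₃,z₂]] ∈ H₂` with `|Re z₁| ≤ 1/2` and `Im z₁ < 1/2`,
and `N₀ ∈ Sp₄(ℤ)` with rows `(0,0,−1,0), (0,1,0,0), (1,0,0,0), (0,0,0,1)`, one has
`det N₀*(Z) = z₁`, `|z₁|² ≤ 1/2`, and `det Im N₀(Z) ≥ 2 · det Im Z`. -/
theorem stmt_8 (Z : Matrix (Fin 2) (Fin 2) ℂ) (hsymm : Z.IsSymm) (hposdef : (imPart Z).PosDef)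
    (hre : |(Z 0 0).re| ≤ 1 / 2) (him : (Z 0 0).im < 1 / 2) :
    (cmat N0C * Z + cmat N0D).det = Z 0 0 ∧
    ‖Z 0 0‖ ^ 2 ≤ 1 / 2 ∧
    2 * (imPart Z).det ≤
      (imPart ((cmat N0A * Z + cmat N0B) * (cmat N0C * Z + cmat N0D)⁻¹)).det := by
  have him_pos : 0 < (Z 0 0).im := hposdef.diag_pos
  have ha : Z 0 0 ≠ 0 := fun h => by simp [h] at him_pos
  have hnorm : Complex.normSq (Z 0 0) ≤ 1 / 2 :=
    normSq_le_half_of_abs_le hre (abs_le.mpr ⟨by linarith, him.le⟩)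
  refine ⟨by simp [lower_block_N0, det_fin_two_of], by rwa [Complex.sq_norm], ?_⟩
  rw [imPart_det_N0_smul hsymm ha, le_div_iff₀ (Complex.normSq_pos.mpr ha)]
  nlinarith [hposdef.det_pos]
end

section
/- Let K be a CM field of degree 2g with maximal totally real subfield K₀, and suppose the different D_{K₀/ℚ} of K₀ is principal, generated by δ ∈ K₀. Let b be a fractional O_{K₀}-ideal with ℤ-basis b₁, …, b_g, and let b₁*, …, b_g* ∈ K₀ be the dual basis with respect to the trace form, i.e. Tr_{K₀/ℚ}(b_i b_j*) = δ_{ij} (Kronecker delta). Let z ∈ K with z ≠ z̄ and set ξ = (z − z̄)⁻¹ δ⁻¹ and E(u, v) = Tr_{K/ℚ}(ξ · u · v̄) for u, v ∈ K. Then for all 1 ≤ i, j ≤ g: E(z b_i, z b_j) = 0, E(δ b_i*, δ b_j*) = 0, and E(z b_i, δ b_j*) = δ_{ij}; in other words, z b₁, …, z b_g, δ b₁*, …, δ b_g* is a symplectic basis of the ℤ-module a = z·b + b⁻¹ with respect to the alternating form E, and in particular E takes integer values on a × a. -/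
/-!
Write `u = z x₁ + y₁` and `v = z x₂ + y₂` with `xᵢ, yᵢ ∈ K₀`. Complex conjugation is an involution
(its order divides `#Aut(K/K₀) ≤ 2`) and `ξ̄ = -ξ`, so `t = ξ u v̄` satisfies
`t + t̄ = (x₁ y₂ - y₁ x₂) / δ ∈ K₀`, whence `Tr_{K/ℚ} t = Tr_{K₀/ℚ} ((x₁ y₂ - y₁ x₂) / δ)`.
The three identities are specializations of this formula. For integrality, `x₁ y₂` and `y₁ x₂`
lie in `b b⁻¹ = 𝓞 K₀`, and `δ⁻¹ 𝓞 K₀` is the trace dual of `𝓞 K₀`.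
-/
open NumberField nonZeroDivisors

namespace Algebra.IsQuadraticExtension

variable {K₀ K : Type*} [Field K₀] [Field K] [Algebra K₀ K] [IsQuadraticExtension K₀ K]

theorem algEquiv_apply_apply (σ : K ≃ₐ[K₀] K) (x : K) : σ (σ x) = x := by
  have hcard : Nat.card (K ≃ₐ[K₀] K) ∣ 2 := by
    have hle : Nat.card (K ≃ₐ[K₀] K) ≤ 2 := by
      simpa [Nat.card_eq_fintype_card, finrank_eq_two] using AlgEquiv.card_le (F := K₀) (K := K)
    interval_cases h : Nat.card (K ≃ₐ[K₀] K) <;> simp_all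
  have hσ : σ ^ 2 = 1 := orderOf_dvd_iff_pow_eq_one.mp ((orderOf_dvd_natCard σ).trans hcard)
  simpa [sq] using DFunLike.congr_fun hσ x

variable (F : Type*) [Field F] [NeZero (2 : F)] [Algebra F K₀] [Algebra F K]
  [IsScalarTower F K₀ K] [FiniteDimensional F K₀]

theorem trace_eq_of_add_algEquiv_apply_eq (σ : K ≃ₐ[K₀] K) {t : K} {x : K₀}
    (h : t + σ t = algebraMap K₀ K x) : trace F K t = trace F K₀ x := by
  have hσ : trace F K (σ t) = trace F K t := trace_eq_of_algEquiv (σ.restrictScalars F) t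
  have h2 : trace F K (algebraMap K₀ K x) = 2 * trace F K₀ x := by
    rw [← trace_trace (S := K₀), trace_algebraMap, finrank_eq_two, two_smul, map_add, two_mul]
  have := congrArg (trace F K) h
  rw [map_add, hσ, h2, ← two_mul] at this
  exact mul_left_cancel₀ two_ne_zero this

theorem trace_inv_sub_mul_mul_apply (σ : K ≃ₐ[K₀] K) {z : K} (hz : z ≠ σ z)
    (d x₁ y₁ x₂ y₂ : K₀) :
    trace F K ((z - σ z)⁻¹ * (algebraMap K₀ K d)⁻¹ *
        (z * algebraMap K₀ K x₁ + algebraMap K₀ K y₁) *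
        σ (z * algebraMap K₀ K x₂ + algebraMap K₀ K y₂)) =
      trace F K₀ ((x₁ * y₂ - y₁ * x₂) / d) := by
  apply trace_eq_of_add_algEquiv_apply_eq F σ
  have hw : z - σ z ≠ 0 := sub_ne_zero.mpr hz
  have hw' : σ z - z ≠ 0 := sub_ne_zero.mpr hz.symm
  simp only [map_mul, map_add, map_inv₀, map_sub, AlgEquiv.commutes, algEquiv_apply_apply,
    map_div₀]
  field_simp
  ring

end Algebra.IsQuadraticExtension

section Different

variable {A K L B : Type*} [CommRing A] [Field K] [CommRing B] [Field L]
  [Algebra A K] [Algebra B L] [Algebra A B] [Algebra K L] [Algebra A L]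
  [IsScalarTower A K L] [IsScalarTower A B L]
  [IsDomain A] [IsFractionRing A K] [FiniteDimensional K L] [Algebra.IsSeparable K L]
  [IsIntegralClosure B A L] [IsFractionRing B L] [IsIntegrallyClosed A] [IsDedekindDomain B]
  [Module.IsTorsionFree A B]

theorem exists_algebraMap_eq_trace_div_of_differentIdeal_le_span {δ : B}
    (hδ : differentIdeal A B ≤ Ideal.span {δ}) (a : B) :
    ∃ n : A, algebraMap A K n = Algebra.trace K L (algebraMap B L a / algebraMap B L δ) := by
  rcases eq_or_ne δ 0 with rfl | hδ0
  · exact ⟨0, by simp⟩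
  have hspan : Ideal.span {δ} ≠ ⊥ := by simpa using hδ0
  have hmem : algebraMap B L a / algebraMap B L δ ∈
      ((Ideal.span {δ} : FractionalIdeal B⁰ L)⁻¹ : FractionalIdeal B⁰ L) := by
    rw [FractionalIdeal.coeIdeal_span_singleton, FractionalIdeal.spanSingleton_inv,
      FractionalIdeal.mem_spanSingleton]
    exact ⟨a, by rw [Algebra.smul_def, div_eq_mul_inv]⟩
  obtain ⟨n, hn⟩ := Submodule.mem_one.mp <|
    (differentialIdeal_le_iff (K := K) (L := L) hspan).mp hδ ⟨_, hmem, rfl⟩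
  exact ⟨n, by simpa using hn⟩

end Different

theorem stmt_9_general
    (g : ℕ)
    (K₀ K : Type*) [Field K₀] [Field K] [NumberField K₀] [NumberField K] [Algebra K₀ K]
    (hquad : Module.finrank K₀ K = 2)
    (conj : K ≃ₐ[K₀] K)
    -- the different of K₀ is principal, generated by δ
    (δ : 𝓞 K₀) (hδ : differentIdeal ℤ (𝓞 K₀) = Ideal.span {δ})
    -- b is a fractional 𝓞 K₀-ideal with ℤ-basis b₁, …, b_g
    (b : FractionalIdeal (𝓞 K₀)⁰ K₀) (hb : b ≠ 0)
    (bv : Fin g → K₀)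
    -- the dual basis with respect to the trace form: Tr_{K₀/ℚ}(bᵢ bⱼ*) = δᵢⱼ
    (bvd : Fin g → K₀)
    (hdual : ∀ i j, Algebra.trace ℚ K₀ (bv i * bvd j) = if i = j then 1 else 0)
    (z : K) (hz : z ≠ conj z)
    (ξ : K) (hξ : ξ = (z - conj z)⁻¹ * (algebraMap K₀ K (algebraMap (𝓞 K₀) K₀ δ))⁻¹)
    (E : K → K → ℚ) (hE : ∀ u v : K, E u v = Algebra.trace ℚ K (ξ * u * conj v)) :
    (∀ i j, E (z * algebraMap K₀ K (bv i)) (z * algebraMap K₀ K (bv j)) = 0) ∧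
    (∀ i j, E (algebraMap K₀ K (algebraMap (𝓞 K₀) K₀ δ * bvd i))
              (algebraMap K₀ K (algebraMap (𝓞 K₀) K₀ δ * bvd j)) = 0) ∧
    (∀ i j, E (z * algebraMap K₀ K (bv i))
              (algebraMap K₀ K (algebraMap (𝓞 K₀) K₀ δ * bvd j)) =
        if i = j then 1 else 0) ∧
    -- in particular, E takes integer values on a × a for a = z·b + b⁻¹
    (∀ x₁ x₂ y₁ y₂ : K₀, x₁ ∈ b → x₂ ∈ b →
      y₁ ∈ (b⁻¹ : FractionalIdeal (𝓞 K₀)⁰ K₀) → y₂ ∈ (b⁻¹ : FractionalIdeal (𝓞 K₀)⁰ K₀) →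
      ∃ n : ℤ, E (z * algebraMap K₀ K x₁ + algebraMap K₀ K y₁)
                 (z * algebraMap K₀ K x₂ + algebraMap K₀ K y₂) = n) := by
  have : Algebra.IsQuadraticExtension K₀ K := ⟨hquad⟩
  set d := algebraMap (𝓞 K₀) K₀ δ
  have hd : d ≠ 0 := by
    rw [ne_eq, map_eq_zero_iff _ (FaithfulSMul.algebraMap_injective _ _)]
    rintro rfl
    exact differentIdeal_ne_bot (by simpa using hδ)
  have hform (x₁ y₁ x₂ y₂ : K₀) : E (z * algebraMap K₀ K x₁ + algebraMap K₀ K y₁)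
      (z * algebraMap K₀ K x₂ + algebraMap K₀ K y₂) =
        Algebra.trace ℚ K₀ ((x₁ * y₂ - y₁ * x₂) / d) := by
    rw [hE, hξ]
    exact Algebra.IsQuadraticExtension.trace_inv_sub_mul_mul_apply ℚ conj hz d x₁ y₁ x₂ y₂
  have hint {x y : K₀} (hx : x ∈ b) (hy : y ∈ b⁻¹) :
      ∃ n : ℤ, Algebra.trace ℚ K₀ (x * y / d) = n := by
    have hxy : x * y ∈ (1 : FractionalIdeal (𝓞 K₀)⁰ K₀) :=
      mul_inv_cancel₀ hb ▸ FractionalIdeal.mul_mem_mul hx hy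
    obtain ⟨a, ha⟩ := (FractionalIdeal.mem_one_iff _).mp hxy
    obtain ⟨n, hn⟩ :=
      exists_algebraMap_eq_trace_div_of_differentIdeal_le_span (K := ℚ) (L := K₀) hδ.le a
    exact ⟨n, by rw [← ha, ← hn, eq_intCast]⟩
  refine ⟨fun i j ↦ ?_, fun i j ↦ ?_, fun i j ↦ ?_, ?_⟩
  · simpa using hform (bv i) 0 (bv j) 0
  · simpa using hform 0 (d * bvd i) 0 (d * bvd j)
  · simpa [mul_div_assoc, mul_div_cancel_left₀ _ hd, hdual] using hform (bv i) 0 0 (d * bvd j)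
  · intro x₁ x₂ y₁ y₂ hx₁ hx₂ hy₁ hy₂
    obtain ⟨n₁, hn₁⟩ := hint hx₁ hy₂
    obtain ⟨n₂, hn₂⟩ := hint hx₂ hy₁
    refine ⟨n₁ - n₂, ?_⟩
    rw [hform, sub_div, map_sub, hn₁, mul_comm y₁, hn₂, Int.cast_sub]

/-- Let `K` be a CM field of degree `2g` with maximal totally real subfield
`K₀` whose different `D_{K₀/ℚ}` is principal, generated by `δ`.  Let `b` be a fractional
`𝓞 K₀`-ideal with ℤ-basis `b₁, …, b_g` and trace-dual basis `b₁*, …, b_g*`.  For `z ∈ K`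
with `z ≠ z̄`, put `ξ = (z − z̄)⁻¹δ⁻¹` and `E(u,v) = Tr_{K/ℚ}(ξ·u·v̄)`.  Then
`E(z bᵢ, z bⱼ) = 0`, `E(δ bᵢ*, δ bⱼ*) = 0` and `E(z bᵢ, δ bⱼ*) = δᵢⱼ`; in particular `E`
takes integer values on `a × a` where `a = z·b + b⁻¹`. -/
theorem stmt_9
    (g : ℕ) (hg : 0 < g)
    (K₀ K : Type*) [Field K₀] [Field K] [NumberField K₀] [NumberField K] [Algebra K₀ K]
    (hdegK₀ : Module.finrank ℚ K₀ = g)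
    (hdegK : Module.finrank ℚ K = 2 * g)
    (hquad : Module.finrank K₀ K = 2)
    (htotreal : ∀ φ : K₀ →+* ℂ, ∀ x : K₀, (φ x).im = 0)
    (htotimag : ∀ φ : K →+* ℂ, ∃ x : K, (φ x).im ≠ 0)
    (conj : K ≃ₐ[K₀] K) (hconj : ∃ x : K, conj x ≠ x)
    -- the different of K₀ is principal, generated by δ
    (δ : 𝓞 K₀) (hδ : differentIdeal ℤ (𝓞 K₀) = Ideal.span {δ})
    -- b is a fractional 𝓞 K₀-ideal with ℤ-basis b₁, …, b_g
    (b : FractionalIdeal (𝓞 K₀)⁰ K₀) (hb : b ≠ 0)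
    (bv : Fin g → K₀)
    (hbv_indep : LinearIndependent ℤ bv)
    (hbv_span : ∀ x : K₀, x ∈ b ↔ x ∈ Submodule.span ℤ (Set.range bv))
    -- the dual basis with respect to the trace form: Tr_{K₀/ℚ}(bᵢ bⱼ*) = δᵢⱼ
    (bvd : Fin g → K₀)
    (hdual : ∀ i j, Algebra.trace ℚ K₀ (bv i * bvd j) = if i = j then 1 else 0)
    (z : K) (hz : z ≠ conj z)
    (ξ : K) (hξ : ξ = (z - conj z)⁻¹ * (algebraMap K₀ K (algebraMap (𝓞 K₀) K₀ δ))⁻¹)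
    (E : K → K → ℚ) (hE : ∀ u v : K, E u v = Algebra.trace ℚ K (ξ * u * conj v)) :
    (∀ i j, E (z * algebraMap K₀ K (bv i)) (z * algebraMap K₀ K (bv j)) = 0) ∧
    (∀ i j, E (algebraMap K₀ K (algebraMap (𝓞 K₀) K₀ δ * bvd i))
              (algebraMap K₀ K (algebraMap (𝓞 K₀) K₀ δ * bvd j)) = 0) ∧
    (∀ i j, E (z * algebraMap K₀ K (bv i))
              (algebraMap K₀ K (algebraMap (𝓞 K₀) K₀ δ * bvd j)) =
        if i = j then 1 else 0) ∧
    -- in particular, E takes integer values on a × a for a = z·b + b⁻¹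
    (∀ x₁ x₂ y₁ y₂ : K₀, x₁ ∈ b → x₂ ∈ b →
      y₁ ∈ (b⁻¹ : FractionalIdeal (𝓞 K₀)⁰ K₀) → y₂ ∈ (b⁻¹ : FractionalIdeal (𝓞 K₀)⁰ K₀) →
      ∃ n : ℤ, E (z * algebraMap K₀ K x₁ + algebraMap K₀ K y₁)
                 (z * algebraMap K₀ K x₂ + algebraMap K₀ K y₂) = n) :=
  stmt_9_general g K₀ K hquad conj δ hδ b hb bv bvd hdual z hz ξ hξ E hE
end

section
/- Let K be a primitive quartic CM field with real quadratic subfield K₀ of discriminant Δ₀; let δ ∈ K₀ satisfy δ² = Δ₀, and let ω ∈ O_{K₀} be such that O_{K₀} = ℤ[ω]. Suppose z ∈ K is such that z·O_{K₀} + O_{K₀} is a fractional O_K-ideal, and let φ₁, φ₂ : K → ℂ be embeddings satisfying Im φ₁(z) > 0 > Im φ₂(z) and φ₁(δ) > 0 > φ₂(δ). Then the symmetric 2×2 complex matrix Z_z with entries (Z_z)₁₁ = φ₁(zδ⁻¹ω²) + φ₂(zδ⁻¹ω²), (Z_z)₁₂ = (Z_z)₂₁ = φ₁(zδ⁻¹ω)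 + φ₂(zδ⁻¹ω), (Z_z)₂₂ = φ₁(zδ⁻¹) + φ₂(zδ⁻¹) lies in the Siegel upper half space H₂, i.e. Im Z_z is positive definite. -/
/-!
Put `tₖ = Im φₖ(zδ⁻¹) = Im φₖ(z) / φₖ(δ)` and `rₖ = φₖ(ω)`, which is real because `K₀` is totally
real. Then `Im Z_z = Bᵀ · diag(t₁, t₂) · B` with `B = [[r₁, 1], [r₂, 1]]`. The sign conditions give
`t₁, t₂ > 0`, and `det B = r₁ - r₂ ≠ 0`: the restrictions of `φ₁, φ₂` to `K₀` differ (they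
disagree at `δ`), while an embedding of `K₀` is determined by its value on the generator `ω` of
`𝓞 K₀`, since `K₀` is the fraction field of `𝓞 K₀`.
-/

open NumberField nonZeroDivisors Matrix

theorem NumberField.ringHom_ext_of_adjoin_eq_top {K L : Type*} [Field K] [NumberField K] [Ring L]
    {ω : 𝓞 K} (hω : Algebra.adjoin ℤ {ω} = ⊤) {f g : K →+* L} (h : f ω = g ω) : f = g :=
  IsLocalization.ringHom_ext (𝓞 K)⁰ <| RingHom.toIntAlgHom_injective <|
    AlgHom.ext_of_adjoin_eq_top hω (by simpa using h)

theorem Matrix.posDef_transpose_mul_diagonal_mul {n : Type*} [Fintype n] [DecidableEq n]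
    {B : Matrix n n ℝ} (hB : B.det ≠ 0) {t : n → ℝ} (ht : ∀ i, 0 < t i) :
    (Bᵀ * diagonal t * B).PosDef :=
  (posDef_diagonal_iff.mpr ht).conjTranspose_mul_mul_same <|
    mulVec_injective_iff_isUnit.mpr <| (isUnit_iff_isUnit_det B).mpr hB.isUnit

section RealOnSubfield

variable {K₀ K : Type*} [Field K₀] [Field K] [Algebra K₀ K] {φ : K →+* ℂ}

theorem map_algebraMap_eq_ofReal_re (hφ : ∀ x : K₀, (φ (algebraMap K₀ K x)).im = 0) (x : K₀) :
    φ (algebraMap K₀ K x) = ((φ (algebraMap K₀ K x)).re : ℂ) :=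
  Complex.ext rfl (hφ x)

theorem re_map_algebraMap_pow (hφ : ∀ x : K₀, (φ (algebraMap K₀ K x)).im = 0) (x : K₀)
    (n : ℕ) : (φ (algebraMap K₀ K (x ^ n))).re = (φ (algebraMap K₀ K x)).re ^ n := by
  rw [map_pow, map_pow, map_algebraMap_eq_ofReal_re hφ, ← Complex.ofReal_pow, Complex.ofReal_re,
    Complex.ofReal_re]

theorem im_map_mul_algebraMap (hφ : ∀ x : K₀, (φ (algebraMap K₀ K x)).im = 0) (a : K)
    (x : K₀) : (φ (a * algebraMap K₀ K x)).im = (φ a).im * (φ (algebraMap K₀ K x)).re := by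
  rw [map_mul, map_algebraMap_eq_ofReal_re hφ x, Complex.im_mul_ofReal, Complex.ofReal_re]

theorem im_map_mul_inv_algebraMap (hφ : ∀ x : K₀, (φ (algebraMap K₀ K x)).im = 0) (a : K)
    (x : K₀) : (φ (a * (algebraMap K₀ K x)⁻¹)).im = (φ a).im / (φ (algebraMap K₀ K x)).re := by
  rw [map_mul, map_inv₀, ← div_eq_mul_inv, map_algebraMap_eq_ofReal_re hφ x,
    Complex.div_ofReal_im, Complex.ofReal_re]

theorem map_im_eq_transpose_mul_diagonal_mul {φ₁ φ₂ : K →+* ℂ}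
    (h₁ : ∀ x : K₀, (φ₁ (algebraMap K₀ K x)).im = 0)
    (h₂ : ∀ x : K₀, (φ₂ (algebraMap K₀ K x)).im = 0) (a : K) (w : K₀)
    (Z : Matrix (Fin 2) (Fin 2) ℂ)
    (hZ11 : Z 0 0 = φ₁ (a * algebraMap K₀ K w ^ 2) + φ₂ (a * algebraMap K₀ K w ^ 2))
    (hZ12 : Z 0 1 = φ₁ (a * algebraMap K₀ K w) + φ₂ (a * algebraMap K₀ K w))
    (hZ21 : Z 1 0 = Z 0 1) (hZ22 : Z 1 1 = φ₁ a + φ₂ a) :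
    Z.map Complex.im =
      !![(φ₁ (algebraMap K₀ K w)).re, 1; (φ₂ (algebraMap K₀ K w)).re, 1]ᵀ *
        diagonal ![(φ₁ a).im, (φ₂ a).im] *
        !![(φ₁ (algebraMap K₀ K w)).re, 1; (φ₂ (algebraMap K₀ K w)).re, 1] := by
  have e00 : (Z 0 0).im = (φ₁ a).im * (φ₁ (algebraMap K₀ K w)).re ^ 2 +
      (φ₂ a).im * (φ₂ (algebraMap K₀ K w)).re ^ 2 := by
    rw [hZ11, Complex.add_im, ← map_pow, im_map_mul_algebraMap h₁, im_map_mul_algebraMap h₂,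
      re_map_algebraMap_pow h₁, re_map_algebraMap_pow h₂]
  have e01 : (Z 0 1).im = (φ₁ a).im * (φ₁ (algebraMap K₀ K w)).re +
      (φ₂ a).im * (φ₂ (algebraMap K₀ K w)).re := by
    rw [hZ12, Complex.add_im, im_map_mul_algebraMap h₁, im_map_mul_algebraMap h₂]
  ext i j
  fin_cases i <;> fin_cases j <;>
    simp [e00, e01, hZ21, hZ22, Matrix.mul_apply, Fin.sum_univ_two] <;> ring

end RealOnSubfield

theorem stmt_13_general
    (K₀ K : Type*) [Field K₀] [Field K] [NumberField K₀] [NumberField K] [Algebra K₀ K]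
    (htotreal : ∀ φ : K₀ →+* ℂ, ∀ x : K₀, (φ x).im = 0)
    (δ : K₀)
    -- ω generates 𝓞 K₀ over ℤ: 𝓞 K₀ = ℤ[ω]
    (ω : 𝓞 K₀) (hω : Algebra.adjoin ℤ ({ω} : Set (𝓞 K₀)) = ⊤)
    (z : K)
    -- embeddings with Im φ₁(z) > 0 > Im φ₂(z) and φ₁(δ) > 0 > φ₂(δ)
    (φ₁ φ₂ : K →+* ℂ)
    (hzsign : 0 < (φ₁ z).im ∧ (φ₂ z).im < 0)
    (hδsign : 0 < (φ₁ (algebraMap K₀ K δ)).re ∧ (φ₂ (algebraMap K₀ K δ)).re < 0)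
    -- the matrix Z_z
    (Z : Matrix (Fin 2) (Fin 2) ℂ)
    (hZ11 : Z 0 0 =
      φ₁ (z * (algebraMap K₀ K δ)⁻¹ * algebraMap K₀ K (algebraMap (𝓞 K₀) K₀ ω) ^ 2) +
      φ₂ (z * (algebraMap K₀ K δ)⁻¹ * algebraMap K₀ K (algebraMap (𝓞 K₀) K₀ ω) ^ 2))
    (hZ12 : Z 0 1 =
      φ₁ (z * (algebraMap K₀ K δ)⁻¹ * algebraMap K₀ K (algebraMap (𝓞 K₀) K₀ ω)) +
      φ₂ (z * (algebraMap K₀ K δ)⁻¹ * algebraMap K₀ K (algebraMap (𝓞 K₀) K₀ ω)))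
    (hZ21 : Z 1 0 = Z 0 1)
    (hZ22 : Z 1 1 =
      φ₁ (z * (algebraMap K₀ K δ)⁻¹) + φ₂ (z * (algebraMap K₀ K δ)⁻¹)) :
    (Z.map Complex.im).PosDef := by
  have h₁ : ∀ x, (φ₁ (algebraMap K₀ K x)).im = 0 := htotreal (φ₁.comp (algebraMap K₀ K))
  have h₂ : ∀ x, (φ₂ (algebraMap K₀ K x)).im = 0 := htotreal (φ₂.comp (algebraMap K₀ K))
  have hφ : φ₁.comp (algebraMap K₀ K) ≠ φ₂.comp (algebraMap K₀ K) := fun h => by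
    have := congrArg (fun f => (f δ).re) h
    simp only [RingHom.comp_apply] at this
    linarith [hδsign.1, hδsign.2]
  have hr : (φ₁ (algebraMap K₀ K ω)).re ≠ (φ₂ (algebraMap K₀ K ω)).re := fun h =>
    hφ <| NumberField.ringHom_ext_of_adjoin_eq_top hω <| by
      rw [RingHom.comp_apply, RingHom.comp_apply, map_algebraMap_eq_ofReal_re h₁,
        map_algebraMap_eq_ofReal_re h₂, h]
  rw [map_im_eq_transpose_mul_diagonal_mul h₁ h₂ _ _ Z hZ11 hZ12 hZ21 hZ22]
  refine posDef_transpose_mul_diagonal_mul (by simpa [det_fin_two_of, sub_eq_zero]) fun i => ?_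
  fin_cases i
  · show 0 < (φ₁ _).im
    rw [im_map_mul_inv_algebraMap h₁]
    exact div_pos hzsign.1 hδsign.1
  · show 0 < (φ₂ _).im
    rw [im_map_mul_inv_algebraMap h₂]
    exact div_pos_of_neg_of_neg hzsign.2 hδsign.2

/-- Let `K` be a primitive quartic CM field with real quadratic subfield
`K₀` of discriminant `Δ₀`, `δ ∈ K₀` with `δ² = Δ₀`, and `ω` with `𝓞 K₀ = ℤ[ω]`.
Suppose `z ∈ K` is such that `z·𝓞 K₀ + 𝓞 K₀` is a fractional `𝓞 K`-ideal, and
`φ₁, φ₂ : K → ℂ` are embeddings with `Im φ₁(z) > 0 > Im φ₂(z)` and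
`φ₁(δ) > 0 > φ₂(δ)`.  Then the symmetric matrix
`Z_z = [[φ₁(zδ⁻¹ω²)+φ₂(zδ⁻¹ω²), φ₁(zδ⁻¹ω)+φ₂(zδ⁻¹ω)], [φ₁(zδ⁻¹ω)+φ₂(zδ⁻¹ω), φ₁(zδ⁻¹)+φ₂(zδ⁻¹)]]`
lies in the Siegel upper half space `H₂`, i.e. `Im Z_z` is positive definite. -/
theorem stmt_13
    (K₀ K : Type*) [Field K₀] [Field K] [NumberField K₀] [NumberField K] [Algebra K₀ K]
    (hdegK : Module.finrank ℚ K = 4)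
    (hdegK₀ : Module.finrank ℚ K₀ = 2)
    (hquad : Module.finrank K₀ K = 2)
    (htotreal : ∀ φ : K₀ →+* ℂ, ∀ x : K₀, (φ x).im = 0)
    (htotimag : ∀ φ : K →+* ℂ, ∃ x : K, (φ x).im ≠ 0)
    (hprim : ∀ F : Subfield K, Module.finrank ℚ F = 2 →
      ∃ φ : F →+* ℂ, ∀ x : F, (φ x).im = 0)
    -- δ ∈ K₀ is a square root of the discriminant Δ₀ of K₀
    (δ : K₀) (hδ : δ ^ 2 = (NumberField.discr K₀ : K₀))
    -- ω generates 𝓞 K₀ over ℤ: 𝓞 K₀ = ℤ[ω]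
    (ω : 𝓞 K₀) (hω : Algebra.adjoin ℤ ({ω} : Set (𝓞 K₀)) = ⊤)
    -- z·𝓞 K₀ + 𝓞 K₀ is a fractional 𝓞 K-ideal (an 𝓞 K-submodule of K)
    (z : K)
    (hz : ∀ r : 𝓞 K, ∀ u v : 𝓞 K₀, ∃ u' v' : 𝓞 K₀,
      algebraMap (𝓞 K) K r *
          (z * algebraMap K₀ K (algebraMap (𝓞 K₀) K₀ u) +
            algebraMap K₀ K (algebraMap (𝓞 K₀) K₀ v)) =
        z * algebraMap K₀ K (algebraMap (𝓞 K₀) K₀ u') +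
          algebraMap K₀ K (algebraMap (𝓞 K₀) K₀ v'))
    -- embeddings with Im φ₁(z) > 0 > Im φ₂(z) and φ₁(δ) > 0 > φ₂(δ)
    (φ₁ φ₂ : K →+* ℂ)
    (hzsign : 0 < (φ₁ z).im ∧ (φ₂ z).im < 0)
    (hδsign : 0 < (φ₁ (algebraMap K₀ K δ)).re ∧ (φ₂ (algebraMap K₀ K δ)).re < 0)
    -- the matrix Z_z
    (Z : Matrix (Fin 2) (Fin 2) ℂ)
    (hZ11 : Z 0 0 =
      φ₁ (z * (algebraMap K₀ K δ)⁻¹ * algebraMap K₀ K (algebraMap (𝓞 K₀) K₀ ω) ^ 2) +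
      φ₂ (z * (algebraMap K₀ K δ)⁻¹ * algebraMap K₀ K (algebraMap (𝓞 K₀) K₀ ω) ^ 2))
    (hZ12 : Z 0 1 =
      φ₁ (z * (algebraMap K₀ K δ)⁻¹ * algebraMap K₀ K (algebraMap (𝓞 K₀) K₀ ω)) +
      φ₂ (z * (algebraMap K₀ K δ)⁻¹ * algebraMap K₀ K (algebraMap (𝓞 K₀) K₀ ω)))
    (hZ21 : Z 1 0 = Z 0 1)
    (hZ22 : Z 1 1 =
      φ₁ (z * (algebraMap K₀ K δ)⁻¹) + φ₂ (z * (algebraMap K₀ K δ)⁻¹)) :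
    (Z.map Complex.im).PosDef :=
  stmt_13_general K₀ K htotreal δ ω hω z φ₁ φ₂ hzsign hδsign Z hZ11 hZ12 hZ21 hZ22
end

section
/- For every real number t ≥ √3/2 and every integer l ≥ 0, the series Σ_{k=l}^{∞} exp(−(3/4)·π·k²·t) converges and its sum satisfies Σ_{k=l}^{∞} exp(−(3/4)·π·k²·t) < 1.15 · exp(−(3/4)·π·t·l²). -/
open Real

/-- For every real `t ≥ √3/2` and every integer `l ≥ 0`, the series
`Σ_{k=l}^∞ exp(−(3/4)·π·k²·t)` converges and its sum is `< 1.15 · exp(−(3/4)·π·t·l²)`.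
The sum over all integers `k ≥ l` is indexed here by `k = l + j` with `j : ℕ`. -/
theorem stmt_16 (t : ℝ) (ht : Real.sqrt 3 / 2 ≤ t) (l : ℕ) :
    Summable (fun j : ℕ => Real.exp (-(3 / 4) * π * ((l + j : ℕ) : ℝ) ^ 2 * t)) ∧
    (∑' j : ℕ, Real.exp (-(3 / 4) * π * ((l + j : ℕ) : ℝ) ^ 2 * t)) <
      1.15 * Real.exp (-(3 / 4) * π * t * (l : ℝ) ^ 2) := by
  have hπ := Real.pi_gt_d6
  have ht3 : (1.732 : ℝ) ≤ Real.sqrt 3 := by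
    rw [show (1.732 : ℝ) = Real.sqrt (1.732 ^ 2) from (Real.sqrt_sq (by norm_num)).symm]
    exact Real.sqrt_le_sqrt (by norm_num)
  have ht' : (0.866 : ℝ) ≤ t := le_trans (by linarith) ht
  set c : ℝ := 3 / 4 * π * t with hc
  have hc0 : 0 < c := by
    have := Real.pi_pos
    nlinarith
  have hcge : (2.040464 : ℝ) ≤ c := by nlinarith
  set r : ℝ := Real.exp (-c) with hrdef
  have hr0 : 0 < r := Real.exp_pos _
  have hr : r < 3 / 23 := by
    have h2 : (23 : ℝ) / 3 < Real.exp 2.040464 := by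
      have he1 := Real.exp_one_gt_d9
      have e2 : Real.exp (2.040464 : ℝ) = Real.exp 1 * Real.exp 1 * Real.exp 0.040464 := by
        rw [← Real.exp_add, ← Real.exp_add]; norm_num
      have h040 : (1.040464 : ℝ) ≤ Real.exp 0.040464 := by
        have := Real.add_one_le_exp (0.040464 : ℝ); linarith
      nlinarith [Real.exp_pos (0.040464 : ℝ), Real.exp_pos (1 : ℝ)]
    have h1 : (23 : ℝ) / 3 < Real.exp c := lt_of_lt_of_le h2 (Real.exp_le_exp.2 hcge)
    rw [hrdef, Real.exp_neg]
    have h23 : (0 : ℝ) < 23 / 3 := by norm_num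
    have := inv_strictAnti₀ h23 h1
    calc (Real.exp c)⁻¹ < (23 / 3 : ℝ)⁻¹ := this
      _ = 3 / 23 := by norm_num
  have hr1 : r < 1 := lt_trans hr (by norm_num)
  set C : ℝ := Real.exp (-(3 / 4) * π * t * (l : ℝ) ^ 2) with hC
  have hC0 : 0 < C := Real.exp_pos _
  -- termwise bound
  have hterm : ∀ j : ℕ, Real.exp (-(3 / 4) * π * ((l + j : ℕ) : ℝ) ^ 2 * t) ≤ C * r ^ j := by
    intro j
    have hrpow : r ^ j = Real.exp (-(c * j)) := by
      rw [hrdef, ← Real.exp_nat_mul]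
      ring_nf
    rw [hrpow, hC, ← Real.exp_add]
    apply Real.exp_le_exp.2
    push_cast
    have hj : (j : ℝ) ≤ (j : ℝ) ^ 2 := by
      have h := Nat.le_self_pow (two_ne_zero) j
      exact_mod_cast h
    have hl : (0 : ℝ) ≤ (l : ℝ) := Nat.cast_nonneg l
    have hj0 : (0 : ℝ) ≤ (j : ℝ) := Nat.cast_nonneg j
    nlinarith [mul_nonneg hl hj0]
  have hgeo : Summable (fun j : ℕ => C * r ^ j) :=
    (summable_geometric_of_lt_one hr0.le hr1).mul_left C
  have hsummable : Summable (fun j : ℕ => Real.exp (-(3 / 4) * π * ((l + j : ℕ) : ℝ) ^ 2 * t)) :=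
    Summable.of_nonneg_of_le (fun j => (Real.exp_pos _).le) hterm hgeo
  refine ⟨hsummable, ?_⟩
  have hle : (∑' j : ℕ, Real.exp (-(3 / 4) * π * ((l + j : ℕ) : ℝ) ^ 2 * t)) ≤
      ∑' j : ℕ, C * r ^ j := Summable.tsum_le_tsum hterm hsummable hgeo
  have hgeosum : (∑' j : ℕ, C * r ^ j) = C * (1 - r)⁻¹ := by
    rw [tsum_mul_left, tsum_geometric_of_lt_one hr0.le hr1]
  have hfinal : C * (1 - r)⁻¹ < 1.15 * C := by
    have h1r : (20 : ℝ) / 23 < 1 - r := by linarith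
    have hinv : (1 - r)⁻¹ < 23 / 20 := by
      have := inv_strictAnti₀ (by norm_num : (0:ℝ) < 20 / 23) h1r
      calc (1 - r)⁻¹ < ((20 : ℝ) / 23)⁻¹ := this
        _ = 23 / 20 := by norm_num
    have : C * (1 - r)⁻¹ < C * (23 / 20) := by
      exact (mul_lt_mul_iff_right₀ hC0).2 hinv
    nlinarith
  calc (∑' j : ℕ, Real.exp (-(3 / 4) * π * ((l + j : ℕ) : ℝ) ^ 2 * t))
      ≤ C * (1 - r)⁻¹ := by rw [← hgeosum]; exact hle
    _ < 1.15 * C := hfinal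
end
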